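/- Let R be a finite set of vectors in ℤ^n. Then there exist positive constants P and Q such that any two linear sets S = { s₀ + λ₁s₁ + ⋯ + λ_p s_p : λᵢ ∈ ℕ } and T = { t₀ + μ₁t₁ + ⋯ + μ_q t_q : μⱼ ∈ ℕ } whose generating vectors s₁,…,s_p, t₁,…,t_q all lie in R either do not intersect or have a common element of ℓ¹-norm less than P·(|s₀| + |t₀|) + Q. -/

import Mathlib

open scoped BigOperators

/-- The ℓ¹ (taxicab) norm on ℤ^n. -/
def norm1 {n : ℕ} (v : Fin n → ℤ) : ℤ := ∑ i, |v i|

/-- The linear subset of ℤ^n with constant s₀ and generating vectors s. -/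
def linSet {n p : ℕ} (s₀ : Fin n → ℤ) (s : Fin p → Fin n → ℤ) : Set (Fin n → ℤ) :=
  {v | ∃ lam : Fin p → ℕ, v = s₀ + ∑ i, (lam i : ℤ) • s i}

/-!
A common point of the two linear sets is `s₀ + y` where `y - z = t₀ - s₀ =: d`, `y` is an
ℕ-combination of generators of `S` and `z` one of generators of `T`; equivalently `d` is an
ℕ-combination of vectors of `R ∪ -R`. It suffices to find such a combination whose coefficient sum
is linear in `|d|`.

Take one with minimal coefficient sum, and let `U` be the set of vectors whose coefficient is at
least a large constant `M`. A nonzero ℕ-relation among `U` with coefficients `≤ M` could be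
subtracted to shorten the combination, so there is none. Gordan's alternative, applied to every
subset of `R ∪ -R` with `M` larger than all the witnesses involved, then gives an integer vector
`w` with `|w| ≤ M` and `w ⬝ c ≥ 1` for `c ∈ U`. Pairing the combination with `w` bounds the
coefficients on `U` by `M |d|` plus a constant; all other coefficients are `< M`.

Gordan's alternative itself comes from separating `0` from the convex hull of `U` in `ℝⁿ`: a
separating functional is approximated by a rational one, and a convex combination giving `0` is
made rational using Carathéodory's theorem, which makes its weights unique.
-/

open Finset Matrix Finsupp Filter Submodule
open scoped Pointwise

variable {n : ℕ}

section Norm1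

lemma norm1_nonneg (v : Fin n → ℤ) : 0 ≤ norm1 v :=
  sum_nonneg fun _ _ => abs_nonneg _

lemma norm1_add_le (u v : Fin n → ℤ) : norm1 (u + v) ≤ norm1 u + norm1 v := by
  simp only [norm1, ← sum_add_distrib]
  exact sum_le_sum fun i _ => abs_add_le _ _

lemma norm1_sub_le (u v : Fin n → ℤ) : norm1 (u - v) ≤ norm1 u + norm1 v := by
  simp only [norm1, ← sum_add_distrib]
  exact sum_le_sum fun i _ => abs_sub _ _

lemma abs_apply_le_norm1 (v : Fin n → ℤ) (i : Fin n) : |v i| ≤ norm1 v :=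
  Finset.single_le_sum (f := fun i => |v i|) (fun _ _ => abs_nonneg _) (mem_univ i)

lemma abs_dotProduct_le (u v : Fin n → ℤ) : |u ⬝ᵥ v| ≤ norm1 u * norm1 v := by
  calc |u ⬝ᵥ v| ≤ ∑ i, |u i| * |v i| := by
        simpa only [dotProduct, abs_mul] using abs_sum_le_sum_abs (fun i => u i * v i) univ
    _ ≤ ∑ i, |u i| * norm1 v := sum_le_sum fun i _ =>
        mul_le_mul_of_nonneg_left (abs_apply_le_norm1 v i) (abs_nonneg _)
    _ = norm1 u * norm1 v := (Finset.sum_mul _ _ _).symm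

lemma dotProduct_linearCombination (w : Fin n → ℤ) (x : (Fin n → ℤ) →₀ ℕ) :
    w ⬝ᵥ linearCombination ℕ id x = ∑ c ∈ x.support, (x c : ℤ) * (w ⬝ᵥ c) := by
  rw [linearCombination_apply, Finsupp.sum, dotProduct_sum]
  exact sum_congr rfl fun c _ => by rw [id, dotProduct_smul, nsmul_eq_mul]

lemma norm1_linearCombination_le {R : Set (Fin n → ℤ)} {M : ℕ} (hR : ∀ c ∈ R, norm1 c ≤ M)
    {x : (Fin n → ℤ) →₀ ℕ} (hx : x ∈ supported ℕ ℕ R) :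
    norm1 (linearCombination ℕ id x) ≤ M * x.degree := by
  calc norm1 (linearCombination ℕ id x) = ∑ i, |∑ c ∈ x.support, (x c : ℤ) * c i| := by
        simp [norm1, linearCombination_apply, Finsupp.sum, Finset.sum_apply]
    _ ≤ ∑ i, ∑ c ∈ x.support, (x c : ℤ) * |c i| := sum_le_sum fun i _ =>
        (abs_sum_le_sum_abs _ _).trans_eq (by simp [abs_mul])
    _ = ∑ c ∈ x.support, (x c : ℤ) * norm1 c := by
        rw [Finset.sum_comm]
        simp [norm1, Finset.mul_sum]
    _ ≤ ∑ c ∈ x.support, (x c : ℤ) * M := sum_le_sum fun c hc =>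
        mul_le_mul_of_nonneg_left (hR c ((mem_supported ℕ x).1 hx hc)) (by positivity)
    _ = M * x.degree := by simp [degree_apply, Finset.mul_sum, mul_comm]

end Norm1

section Gordan

lemma exists_rat_mulVec_eq_of_real {ι κ : Type*} [Fintype ι] [Fintype κ] (A : Matrix κ ι ℚ)
    (b : κ → ℚ) (x : ι → ℝ) (hx : A.map (↑) *ᵥ x = (↑) ∘ b) : ∃ y : ι → ℚ, A *ᵥ y = b := by
  classical
  by_contra! h
  obtain ⟨f, hfb, hf⟩ := Submodule.exists_dual_map_eq_bot_of_notMem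
    (p := LinearMap.range A.mulVecLin) (fun ⟨y, hy⟩ => h y hy) inferInstance
  obtain ⟨u, rfl⟩ := (dotProductEquiv ℚ κ).surjective f
  have huA : u ᵥ* A = 0 := by
    funext i
    have hmem := Submodule.mem_map_of_mem (f := dotProductEquiv ℚ κ u)
      (LinearMap.mem_range_self A.mulVecLin (Pi.single i 1))
    rw [hf, Submodule.mem_bot, dotProductEquiv_apply_apply, Matrix.mulVecLin_apply,
      Matrix.dotProduct_mulVec] at hmem
    simpa using hmem
  have huA' : ((↑) ∘ u : κ → ℝ) ᵥ* A.map (↑) = 0 := by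
    funext i
    simpa [huA] using (RingHom.map_vecMul (Rat.castHom ℝ) A u i).symm
  have : ((u ⬝ᵥ b : ℚ) : ℝ) = 0 := by
    calc ((u ⬝ᵥ b : ℚ) : ℝ) = ((↑) ∘ u : κ → ℝ) ⬝ᵥ ((↑) ∘ b) := by simp [dotProduct]
      _ = 0 := by rw [← hx, Matrix.dotProduct_mulVec, huA', zero_dotProduct]
  exact hfb (by simpa using this)

lemma exists_pos_nat_mul_eq_int {ι : Type*} [Fintype ι] (q : ι → ℚ) :
    ∃ N : ℕ, 0 < N ∧ ∃ z : ι → ℤ, ∀ i, (z i : ℚ) = N * q i := by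
  refine ⟨∏ i, (q i).den, Finset.prod_pos fun i _ => (q i).pos,
    fun i => (q i).num * ((∏ i, (q i).den) / (q i).den : ℕ), fun i => ?_⟩
  have hden : (q i).den ∣ ∏ i, (q i).den := Finset.dvd_prod_of_mem _ (Finset.mem_univ i)
  rw [Int.cast_mul, Int.cast_natCast, Nat.cast_div hden (by simp), ← Rat.mul_den_eq_num]
  field_simp

lemma exists_separator_of_zero_notMem_convexHull {U : Finset (Fin n → ℤ)}
    (h : (0 : Fin n → ℝ) ∉ convexHull ℝ ((Int.cast ∘ ·) '' (U : Set (Fin n → ℤ)))) :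
    ∃ w : Fin n → ℤ, ∀ c ∈ U, 0 < w ⬝ᵥ c := by
  obtain ⟨f, u, hf0, hfU⟩ := geometric_hahn_banach_point_closed (convex_convexHull ℝ _)
    ((U.finite_toSet.image _).isCompact_convexHull (𝕜 := ℝ)).isClosed h
  set O : Set (Fin n → ℝ) := {g | ∀ c ∈ U, 0 < g ⬝ᵥ (Int.cast ∘ c)}
  have hO : IsOpen O := by
    simp only [O, Set.ofPred_forall]
    exact isOpen_biInter_finset fun c _ => isOpen_lt continuous_const (by fun_prop)
  have hOne : O.Nonempty := by
    obtain ⟨g, hg⟩ := (dotProductEquiv ℝ (Fin n)).surjective f.toLinearMap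
    refine ⟨g, fun c hc => ?_⟩
    have := hfU _ (subset_convexHull ℝ _ ⟨c, hc, rfl⟩)
    rw [map_zero] at hf0
    rw [← ContinuousLinearMap.coe_coe, ← hg, dotProductEquiv_apply_apply] at this
    linarith
  obtain ⟨q, hq⟩ := (DenseRange.piMap fun _ => Rat.denseRange_cast).exists_mem_open hO hOne
  obtain ⟨N, hN, w, hw⟩ := exists_pos_nat_mul_eq_int q
  refine ⟨w, fun c hc => ?_⟩
  have hwc : ((w ⬝ᵥ c : ℤ) : ℝ) = N * (Pi.map (fun _ => Rat.cast) q ⬝ᵥ (Int.cast ∘ c)) := by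
    have hw' : ∀ i, (w i : ℝ) = N * q i := fun i => by exact_mod_cast congrArg Rat.cast (hw i)
    simp [dotProduct, Finset.mul_sum, ← mul_assoc, hw']
  have : (0 : ℝ) < (w ⬝ᵥ c : ℤ) := hwc ▸ mul_pos (by exact_mod_cast hN) (hq c hc)
  exact_mod_cast this

lemma exists_pos_rat_combination_eq_zero {U : Set (Fin n → ℤ)}
    (h : (0 : Fin n → ℝ) ∈ convexHull ℝ ((Int.cast ∘ ·) '' U)) :
    ∃ (ι : Type) (_ : Fintype ι) (k : ι → Fin n → ℤ) (y : ι → ℚ),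
      Nonempty ι ∧ (∀ i, k i ∈ U) ∧ (∀ i, 0 < y i) ∧ ∀ j, ∑ i, y i * k i j = 0 := by
  obtain ⟨ι, _, z, w, hzU, hai, hw0, hw1, hwz⟩ := eq_pos_convex_span_of_mem_convexHull h
  choose k hkU hkz using fun i => hzU ⟨i, rfl⟩
  classical
  set A : Matrix (Option (Fin n)) ι ℚ := Matrix.of fun o i => o.elim 1 fun j => (k i j : ℚ)
  set b : Option (Fin n) → ℚ := fun o => o.elim 1 fun _ => 0
  have hsolves : ∀ x : ι → ℝ,
      A.map (↑) *ᵥ x = (↑) ∘ b ↔ ∑ i, x i = 1 ∧ ∑ i, x i • z i = 0 := by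
    intro x
    simp only [funext_iff, Option.forall, ← hkz]
    simp [A, b, mulVec, dotProduct, mul_comm]
  obtain ⟨y, hy⟩ := exists_rat_mulVec_eq_of_real A b w ((hsolves w).2 ⟨hw1, hwz⟩)
  -- the points `z i` are affinely independent, so the real solution `w` is unique
  have hyw : w = ((↑) ∘ y : ι → ℝ) := by
    have hy' := (hsolves ((↑) ∘ y)).1 (by
      funext o
      simpa [hy] using (RingHom.map_mulVec (Rat.castHom ℝ) A y o).symm)
    refine (affineIndependent_iff_eq_of_fintype_affineCombination_eq ℝ z).1 hai _ _ hw1 hy'.1 ?_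
    rw [Finset.affineCombination_eq_linear_combination _ _ _ hw1,
      Finset.affineCombination_eq_linear_combination _ _ _ hy'.1, hwz, hy'.2]
  refine ⟨ι, inferInstance, k, y, ?_, hkU, fun i => ?_, fun j => ?_⟩
  · by_contra! hempty
    simp at hw1
  · have := hw0 i
    rw [hyw, Function.comp_apply] at this
    exact_mod_cast this
  · simpa [A, b, mulVec, dotProduct, mul_comm] using congrFun hy (some j)

lemma exists_relation_of_zero_mem_convexHull {U : Set (Fin n → ℤ)}
    (h : (0 : Fin n → ℝ) ∈ convexHull ℝ ((Int.cast ∘ ·) '' U)) :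
    ∃ r ∈ supported ℕ ℕ U, r ≠ 0 ∧ linearCombination ℕ id r = 0 := by
  obtain ⟨ι, _, k, y, ⟨i₀⟩, hkU, hypos, hyk⟩ := exists_pos_rat_combination_eq_zero h
  obtain ⟨N, hN, m, hm⟩ := exists_pos_nat_mul_eq_int y
  have hmpos : ∀ i, 0 < m i := fun i => by
    have : (0 : ℚ) < m i := hm i ▸ mul_pos (by exact_mod_cast hN) (hypos i)
    exact_mod_cast this
  have hmk : ∑ i, (m i).toNat • k i = 0 := by
    funext j
    have : ((∑ i, m i * k i j : ℤ) : ℚ) = 0 := by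
      push_cast
      simp_rw [hm, mul_assoc, ← Finset.mul_sum, hyk, mul_zero]
    simpa [Int.toNat_of_nonneg (hmpos _).le] using (by exact_mod_cast this : ∑ i, m i * k i j = 0)
  refine ⟨∑ i, single (k i) (m i).toNat, (mem_supported ℕ _).2 fun c hc => ?_, fun h0 => ?_,
    by simpa [map_sum] using hmk⟩
  · obtain ⟨i, -, hi⟩ := Finset.mem_biUnion.1 (Finsupp.support_finsetSum hc)
    rw [Finset.mem_singleton.1 (support_single_subset hi)]
    exact hkU i
  · have := congrArg degree h0
    simp only [map_sum, degree_single, map_zero, Finset.sum_eq_zero_iff, Finset.mem_univ,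
      true_implies] at this
    exact (hmpos i₀).not_ge (by simpa using this i₀)

theorem gordan_alternative (U : Finset (Fin n → ℤ)) :
    (∃ r ∈ supported ℕ ℕ (U : Set (Fin n → ℤ)), r ≠ 0 ∧ linearCombination ℕ id r = 0) ∨
      ∃ w : Fin n → ℤ, ∀ c ∈ U, 0 < w ⬝ᵥ c := by
  by_cases h : (0 : Fin n → ℝ) ∈ convexHull ℝ ((Int.cast ∘ ·) '' (U : Set (Fin n → ℤ)))
  exacts [.inl (exists_relation_of_zero_mem_convexHull h),
    .inr (exists_separator_of_zero_notMem_convexHull h)]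

end Gordan

section Core

def IsGordanBound (R : Finset (Fin n → ℤ)) (M : ℕ) : Prop :=
  (∀ c ∈ R, norm1 c ≤ M) ∧ ∀ U ⊆ R,
    (∃ r ∈ supported ℕ ℕ (U : Set (Fin n → ℤ)),
      r ≠ 0 ∧ r.degree ≤ M ∧ linearCombination ℕ id r = 0) ∨
    ∃ w : Fin n → ℤ, norm1 w ≤ M ∧ ∀ c ∈ U, 0 < w ⬝ᵥ c

lemma eventually_isGordanBound (R : Finset (Fin n → ℤ)) : ∀ᶠ M in atTop, IsGordanBound R M := by
  refine ((eventually_all_finset R).2 fun c _ => ?_).and ?_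
  · exact (eventually_ge_atTop (norm1 c).toNat).mono fun M hM => by omega
  · refine ((eventually_all_finset R.powerset).2 fun U _ => ?_).mono
      fun M hM U hU => hM U (mem_powerset.2 hU)
    rcases gordan_alternative U with ⟨r, hr, hr0, hrel⟩ | ⟨w, hw⟩
    · exact (eventually_ge_atTop r.degree).mono fun M hM => .inl ⟨r, hr, hr0, hM, hrel⟩
    · exact (eventually_ge_atTop (norm1 w).toNat).mono fun M hM => .inr ⟨w, by omega, hw⟩

lemma exists_degree_minimal_of_mem_span {H : Set (Fin n → ℤ)} {d : Fin n → ℤ}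
    (hd : d ∈ span ℕ H) :
    ∃ x ∈ supported ℕ ℕ H, linearCombination ℕ id x = d ∧
      ∀ x' ∈ supported ℕ ℕ H, linearCombination ℕ id x' = d → x.degree ≤ x'.degree := by
  rw [← Set.image_id H, mem_span_image_iff_linearCombination] at hd
  obtain ⟨x, ⟨hxH, hxd⟩, hmin⟩ := (measure (degree : ((Fin n → ℤ) →₀ ℕ) → ℕ)).wf.has_min _ hd
  exact ⟨x, hxH, hxd, fun x' hx'H hx'd => not_lt.1 (hmin x' ⟨hx'H, hx'd⟩)⟩

lemma eq_zero_of_le_of_degree_minimal {H : Set (Fin n → ℤ)} {x r : (Fin n → ℤ) →₀ ℕ}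
    (hxH : x ∈ supported ℕ ℕ H)
    (hmin : ∀ x' ∈ supported ℕ ℕ H, linearCombination ℕ id x' = linearCombination ℕ id x →
      x.degree ≤ x'.degree)
    (hrx : r ≤ x) (hr : linearCombination ℕ id r = 0) : r = 0 := by
  have hsplit : x - r + r = x := tsub_add_cancel_of_le hrx
  have hdeg := hmin (x - r) ?_ ?_
  · rw [← degree_eq_zero_iff]
    have := congrArg degree hsplit
    rw [map_add] at this
    omega
  · exact (Finsupp.mem_supported ℕ _).2
      ((Finset.coe_subset.2 support_tsub).trans ((Finsupp.mem_supported ℕ x).1 hxH))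
  · have := congrArg (linearCombination ℕ id) hsplit
    rwa [map_add, hr, add_zero] at this

theorem exists_degree_le_of_mem_span {R : Finset (Fin n → ℤ)} {M : ℕ} (hM : IsGordanBound R M)
    {H : Set (Fin n → ℤ)} (hH : H ⊆ R) {d : Fin n → ℤ} (hd : d ∈ span ℕ H) :
    ∃ x ∈ supported ℕ ℕ H, linearCombination ℕ id x = d ∧
      (x.degree : ℤ) ≤ M * norm1 d + #R * (M * (M * M + 1)) := by
  classical
  obtain ⟨x, hxH, hxd, hmin⟩ := exists_degree_minimal_of_mem_span hd
  have hxR : x.support ⊆ R := Finset.coe_subset.1 (((Finsupp.mem_supported ℕ x).1 hxH).trans hH)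
  set U := x.support.filter (M ≤ x ·)
  obtain ⟨w, hwM, hwU⟩ : ∃ w : Fin n → ℤ, norm1 w ≤ M ∧ ∀ c ∈ U, 0 < w ⬝ᵥ c := by
    refine (hM.2 U ((filter_subset _ _).trans hxR)).resolve_left ?_
    rintro ⟨r, hrU, hr0, hrM, hr⟩
    refine hr0 (eq_zero_of_le_of_degree_minimal hxH (hxd ▸ hmin) (fun c => ?_) hr)
    by_cases hc : c ∈ U
    · exact (le_degree c r).trans (hrM.trans (mem_filter.1 hc).2)
    · simp [notMem_support_iff.1 fun h => hc (hrU h)]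
  have hpoint : ∀ c ∈ x.support, (x c : ℤ) ≤ x c * (w ⬝ᵥ c) + M * (M * M + 1) := by
    intro c hc
    by_cases hcU : c ∈ U
    · have := hwU c hcU
      nlinarith
    · have hxc : (x c : ℤ) < M := by simpa [U, hc] using hcU
      have hwc : -(M * M : ℤ) ≤ w ⬝ᵥ c := by
        have := (abs_dotProduct_le w c).trans
          (mul_le_mul hwM (hM.1 c (hxR hc)) (norm1_nonneg c) (by positivity))
        exact neg_le_of_abs_le this
      nlinarith
  refine ⟨x, hxH, hxd, ?_⟩
  calc (x.degree : ℤ) = ∑ c ∈ x.support, (x c : ℤ) := by simp [degree_apply]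
    _ ≤ ∑ c ∈ x.support, ((x c : ℤ) * (w ⬝ᵥ c) + M * (M * M + 1)) := sum_le_sum hpoint
    _ = w ⬝ᵥ d + #x.support * (M * (M * M + 1)) := by
      rw [sum_add_distrib, ← hxd, dotProduct_linearCombination, sum_const, nsmul_eq_mul]
    _ ≤ M * norm1 d + #R * (M * (M * M + 1)) := by
      gcongr
      exact (le_abs_self _).trans ((abs_dotProduct_le w d).trans
        (mul_le_mul_of_nonneg_right hwM (norm1_nonneg d)))

end Core

section LinearSets

lemma Submodule.neg_mem_span_nat_neg {M : Type*} [AddCommGroup M] {S : Set M} {a : M}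
    (ha : a ∈ span ℕ S) : -a ∈ span ℕ (-S) := by
  rw [← Submodule.mem_toAddSubmonoid, Submodule.span_nat_eq_addSubmonoidClosure] at ha ⊢
  rwa [AddSubmonoid.mem_closure_neg, neg_neg]

lemma Finsupp.linearCombination_id_mem_span {M : Type*} [AddCommMonoid M] {S : Set M}
    {x : M →₀ ℕ} (hx : x ∈ supported ℕ ℕ S) : linearCombination ℕ id x ∈ span ℕ S := by
  rw [← Set.image_id S, mem_span_image_iff_linearCombination]
  exact ⟨x, hx, rfl⟩

lemma mem_linSet_iff {p : ℕ} {s₀ v : Fin n → ℤ} {s : Fin p → Fin n → ℤ} :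
    v ∈ linSet s₀ s ↔ v - s₀ ∈ span ℕ (Set.range s) := by
  rw [mem_span_range_iff_exists_fun]
  simp only [linSet, Set.mem_ofPred_eq, Nat.cast_smul_eq_nsmul]
  exact exists_congr fun lam => by rw [eq_sub_iff_add_eq, eq_comm, add_comm]

theorem exists_sub_eq_norm1_le {R : Finset (Fin n → ℤ)} {M : ℕ} (hM : IsGordanBound (R ∪ -R) M)
    {S T : Set (Fin n → ℤ)} (hS : S ⊆ R) (hT : T ⊆ R) {a b d : Fin n → ℤ}
    (ha : a ∈ span ℕ S) (hb : b ∈ span ℕ T) (hd : a - b = d) :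
    ∃ y ∈ span ℕ S, ∃ z ∈ span ℕ T, y - z = d ∧
      norm1 y ≤ M * (M * norm1 d + #(R ∪ -R) * (M * (M * M + 1))) := by
  classical
  have hST : S ∪ -T ⊆ ↑(R ∪ -R) := by
    rw [Finset.coe_union, Finset.coe_neg]
    exact Set.union_subset_union hS (Set.neg_subset_neg.2 hT)
  have hdST : d ∈ span ℕ (S ∪ -T) := hd ▸ by
    simpa [sub_eq_add_neg] using add_mem (span_mono Set.subset_union_left ha)
      (span_mono Set.subset_union_right (neg_mem_span_nat_neg hb))
  obtain ⟨x, hxST, hxd, hxdeg⟩ := exists_degree_le_of_mem_span hM hST hdST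
  set y := x.filter (· ∈ S)
  set z := x.filter (· ∉ S)
  have hyS : y ∈ supported ℕ ℕ S := (Finsupp.mem_supported ℕ y).2 fun c hc => by
    simp only [y, support_filter, coe_filter, Set.mem_ofPred_eq] at hc
    exact hc.2
  have hzT : z ∈ supported ℕ ℕ (-T) := (Finsupp.mem_supported ℕ z).2 fun c hc => by
    have := (Finsupp.mem_supported ℕ x).1 hxST
    simp only [z, support_filter, coe_filter, Set.mem_ofPred_eq] at hc
    exact (this hc.1).resolve_left hc.2
  refine ⟨_, linearCombination_id_mem_span hyS, _,
    by simpa using neg_mem_span_nat_neg (linearCombination_id_mem_span hzT), ?_, ?_⟩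
  · rw [sub_neg_eq_add, ← map_add, filter_add_filter_not, hxd]
  · have hyx : y.degree ≤ x.degree := by
      rw [← filter_add_filter_not x (· ∈ S), map_add]
      exact Nat.le_add_right _ _
    calc norm1 (linearCombination ℕ id y) ≤ M * y.degree :=
          norm1_linearCombination_le hM.1 (supported_mono (Set.subset_union_left.trans hST) hyS)
      _ ≤ _ := by
          gcongr
          exact (Nat.cast_le.2 hyx).trans hxdeg

end LinearSets

/-- Corollary 3.3: for a finite set R of vectors in ℤ^n there are constants P, Q > 0 such
that any two linear sets whose generating vectors lie in R either do not intersect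
or have a common element of norm less than P(|s₀| + |t₀|) + Q. -/
theorem linear_sets_intersection_bound_finset {n : ℕ} (R : Finset (Fin n → ℤ)) :
    ∃ P Q : ℤ, 0 < P ∧ 0 < Q ∧
      ∀ (p q : ℕ) (s : Fin p → Fin n → ℤ) (t : Fin q → Fin n → ℤ),
        (∀ i, s i ∈ R) → (∀ j, t j ∈ R) →
        ∀ s₀ t₀ : Fin n → ℤ,
          (linSet s₀ s ∩ linSet t₀ t).Nonempty →
            ∃ v ∈ linSet s₀ s ∩ linSet t₀ t,
              norm1 v < P * (norm1 s₀ + norm1 t₀) + Q := by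
  obtain ⟨M, hM⟩ := (eventually_isGordanBound (R ∪ -R)).exists
  set K : ℤ := #(R ∪ -R) * (M * (M * M + 1))
  refine ⟨M * M + 1, M * K + 1, by positivity, by positivity, ?_⟩
  rintro p q s t hs ht s₀ t₀ ⟨v₀, hv₀s, hv₀t⟩
  rw [mem_linSet_iff] at hv₀s hv₀t
  obtain ⟨y, hy, z, hz, hyz, hy_norm⟩ :=
    exists_sub_eq_norm1_le hM (Set.range_subset_iff.2 hs) (Set.range_subset_iff.2 ht) hv₀s hv₀t
      (sub_sub_sub_cancel_left _ _ _)
  refine ⟨s₀ + y, ⟨?_, ?_⟩, ?_⟩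
  · rwa [mem_linSet_iff, add_sub_cancel_left]
  · rwa [mem_linSet_iff, show s₀ + y - t₀ = z by rw [← sub_eq_zero, ← sub_eq_zero.2 hyz]; abel]
  · have hd : M * norm1 (t₀ - s₀) ≤ M * (norm1 s₀ + norm1 t₀) :=
      mul_le_mul_of_nonneg_left ((norm1_sub_le t₀ s₀).trans_eq (add_comm _ _)) (by positivity)
    nlinarith [norm1_add_le s₀ y, norm1_nonneg t₀]
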